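/- (Lemma 4) Let 0 < θ < π and 0 < θ + τ < π, and let Q be the linear map with matrix [[1, α], [0, β]], where α = (cos(θ+τ) − cos θ)/sin θ and β = sin(θ+τ)/sin θ. Let K be the triangle with vertices (0,0), (1,0), (cos θ, sin θ), so that K̃ = Q(K) is the triangle with vertices (0,0), (1,0), (cos(θ+τ), sin(θ+τ)). Set ρ = cos((θ+τ)/2)/cos(θ/2) and η = sin((θ+τ)/2)/sin(θ/2). For any u : ℝ² → ℝ twice continuously differentiable on an open neighborhood of the closed triangle K, with ũ = u ∘ Q⁻¹: if τ < 0, then (η/√β)·‖∇ũ‖_{K̃} ≤ ‖∇u‖_K ≤ (ρ/√β)·‖∇ũ‖_{K̃} and (η²/√β)·‖D²ũ‖_{K̃} ≤ ‖D²u‖_K ≤ (ρ²/√β)·‖D²ũ‖_{K̃}; if τ > 0, the same inequalities hold with the roles of ρ and η exchanged. -/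

import Mathlib

open MeasureTheory Real

noncomputable section

/-- Points of the plane. -/
abbrev Pt : Type := ℝ × ℝ

/-- The closed triangle with vertices `O`, `A`, `B`. -/
def Tri (O A B : Pt) : Set Pt := convexHull ℝ {O, A, B}

/-- The triangle with vertices `O`, `A`, `B` is nondegenerate. -/
def Nondeg (O A B : Pt) : Prop := ¬ Collinear ℝ ({O, A, B} : Set Pt)

/-- Euclidean length of a vector of the plane. -/
def elen (v : Pt) : ℝ := Real.sqrt (v.1 ^ 2 + v.2 ^ 2)

/-- Partial derivative in the `x` direction. -/
def pdx (u : Pt → ℝ) (p : Pt) : ℝ := fderiv ℝ u p (1, 0)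

/-- Partial derivative in the `y` direction. -/
def pdy (u : Pt → ℝ) (p : Pt) : ℝ := fderiv ℝ u p (0, 1)

/-- `‖u‖_K²  = ∫_K u² dxdy`. -/
def l2sq (u : Pt → ℝ) (K : Set Pt) : ℝ := ∫ p in K, (u p) ^ 2

/-- `‖∇u‖_K² = ∫_K (u_x² + u_y²) dxdy`. -/
def h1sq (u : Pt → ℝ) (K : Set Pt) : ℝ := ∫ p in K, ((pdx u p) ^ 2 + (pdy u p) ^ 2)

/-- `‖D²u‖_K² = ∫_K (u_xx² + u_xy² + u_yx² + u_yy²) dxdy`. -/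
def h2sq (u : Pt → ℝ) (K : Set Pt) : ℝ :=
  ∫ p in K, ((pdx (pdx u) p) ^ 2 + (pdy (pdx u) p) ^ 2
    + (pdx (pdy u) p) ^ 2 + (pdy (pdy u) p) ^ 2)

/-- `‖u‖_K`. -/
def l2norm (u : Pt → ℝ) (K : Set Pt) : ℝ := Real.sqrt (l2sq u K)

/-- `‖∇u‖_K`. -/
def h1norm (u : Pt → ℝ) (K : Set Pt) : ℝ := Real.sqrt (h1sq u K)

/-- `‖D²u‖_K`. -/
def h2norm (u : Pt → ℝ) (K : Set Pt) : ℝ := Real.sqrt (h2sq u K)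

/-- `u` is twice continuously differentiable on an open neighborhood of `K`. -/
def Smooth2 (u : Pt → ℝ) (K : Set Pt) : Prop :=
  ∃ U : Set Pt, IsOpen U ∧ K ⊆ U ∧ ContDiffOn ℝ 2 u U

/-- `w` is continuously differentiable on an open neighborhood of `K`. -/
def Smooth1 (w : Pt → ℝ) (K : Set Pt) : Prop :=
  ∃ U : Set Pt, IsOpen U ∧ K ⊆ U ∧ ContDiffOn ℝ 1 w U

/-- Line integral of `g` along the edge from `P` to `Q`:
`∫_e g ds = |Q − P| ∫₀¹ g(P + t(Q−P)) dt`. -/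
def edgeInt (g : Pt → ℝ) (P Q : Pt) : ℝ :=
  elen (Q - P) * ∫ t in (0:ℝ)..1, g (P + t • (Q - P))

/-- Outward unit normal of the edge from `P` to `Q` of the triangle whose third vertex is `R`
(the unit vector perpendicular to `Q − P` pointing away from `R`). -/
def outNormal (P Q R : Pt) : Pt :=
  (if (Q - P).2 * (R - P).1 - (Q - P).1 * (R - P).2 ≤ 0 then (elen (Q - P))⁻¹
    else -(elen (Q - P))⁻¹) • ((Q - P).2, -((Q - P).1))

/-- The normal derivative `∂u/∂n = ∇u ⋅ n` along the edge from `P` to `Q`,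
with `n` the outward normal (w.r.t. third vertex `R`). -/
def normalDeriv (u : Pt → ℝ) (P Q R : Pt) (p : Pt) : ℝ := fderiv ℝ u p (outNormal P Q R)

/-- `u ∈ V_FM(K)` for the triangle `K` with vertices `O`, `A`, `B`: `u` is C² near `K`,
vanishes at the three vertices, and has vanishing mean normal derivative on each edge. -/
def MemVFM (u : Pt → ℝ) (O A B : Pt) : Prop :=
  Smooth2 u (Tri O A B) ∧ u O = 0 ∧ u A = 0 ∧ u B = 0 ∧
  edgeInt (normalDeriv u O A B) O A = 0 ∧
  edgeInt (normalDeriv u A B O) A B = 0 ∧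
  edgeInt (normalDeriv u B O A) B O = 0

/-- `w ∈ V_CR(K)` for the triangle `K` with vertices `O`, `A`, `B`: `w` is C¹ near `K`
and has vanishing mean value on each edge. -/
def MemVCR (w : Pt → ℝ) (O A B : Pt) : Prop :=
  Smooth1 w (Tri O A B) ∧
  edgeInt w O A = 0 ∧ edgeInt w A B = 0 ∧ edgeInt w B O = 0

/-- The longest edge length of the triangle with vertices `O`, `A`, `B`. -/
def longestEdge (O A B : Pt) : ℝ := max (elen (A - O)) (max (elen (B - A)) (elen (O - B)))

/-- The linear map with matrix `[[1, α], [0, β]]`. -/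
def Qmap (α β : ℝ) (p : Pt) : Pt := (p.1 + α * p.2, β * p.2)

/-- The inverse of `Qmap α β` (for `β ≠ 0`). -/
def Qinv (α β : ℝ) (p : Pt) : Pt := (p.1 - (α / β) * p.2, p.2 / β)


/-! ### Auxiliary lemmas for `stmt_11` -/

private lemma quad_nonneg' (A B C a b : ℝ) (hA : 0 ≤ A) (hB : 0 ≤ B) (hC : C^2 = A*B) :
    0 ≤ A*a^2 + 2*C*a*b + B*b^2 := by
  rcases eq_or_lt_of_le hA with h | h
  · have hC0 : C = 0 := by nlinarith [sq_nonneg C]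
    rw [hC0, ← h]; nlinarith [sq_nonneg b]
  · nlinarith [sq_nonneg (A*a + C*b)]

private lemma vec_lower' (α β s t a b : ℝ) (hs1 : 1 ≤ s^2) (ht1 : t^2 ≤ 1)
    (hst : s*t = β) (hsum : s^2+t^2 = 1+α^2+β^2) :
    t^2*(a^2+b^2) ≤ a^2+(α*a+β*b)^2 := by
  subst hst
  have hA : (0:ℝ) ≤ 1+α^2-t^2 := by nlinarith [sq_nonneg α]
  have hB : (0:ℝ) ≤ (s*t)^2-t^2 := by
    nlinarith [mul_nonneg (sq_nonneg t) (by linarith : (0:ℝ) ≤ s^2-1)]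
  have hC : (α*(s*t))^2 = (1+α^2-t^2)*((s*t)^2-t^2) := by linear_combination (-t^2) * hsum
  nlinarith [quad_nonneg' (1+α^2-t^2) ((s*t)^2-t^2) (α*(s*t)) a b hA hB hC]

private lemma vec_upper' (α β s t a b : ℝ) (hs1 : 1 ≤ s^2) (ht1 : t^2 ≤ 1)
    (hst : s*t = β) (hsum : s^2+t^2 = 1+α^2+β^2) :
    a^2+(α*a+β*b)^2 ≤ s^2*(a^2+b^2) := by
  subst hst
  have hA : (0:ℝ) ≤ s^2-1-α^2 := by
    nlinarith [mul_nonneg (sq_nonneg t) (by linarith : (0:ℝ) ≤ s^2-1)]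
  have hB : (0:ℝ) ≤ s^2-(s*t)^2 := by
    nlinarith [mul_nonneg (sq_nonneg s) (by linarith : (0:ℝ) ≤ 1-t^2)]
  have hC : (-(α*(s*t)))^2 = (s^2-1-α^2)*(s^2-(s*t)^2) := by linear_combination (-s^2) * hsum
  nlinarith [quad_nonneg' (s^2-1-α^2) (s^2-(s*t)^2) (-(α*(s*t))) a b hA hB hC]

private lemma mat_upper' (α β s t h11 h12 h21 h22 : ℝ) (hs1 : 1 ≤ s^2) (ht1 : t^2 ≤ 1)
    (hst : s*t = β) (hsum : s^2+t^2 = 1+α^2+β^2) :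
    h11^2 + (α*h11+β*h12)^2 + (α*h11+β*h21)^2 + (α*(α*h11+β*h21)+β*(α*h12+β*h22))^2
      ≤ s^4 * (h11^2+h12^2+h21^2+h22^2) := by
  have v1 := vec_upper' α β s t h11 h12 hs1 ht1 hst hsum
  have v2 := vec_upper' α β s t (α*h11+β*h21) (α*h12+β*h22) hs1 ht1 hst hsum
  have v3 := vec_upper' α β s t h11 h21 hs1 ht1 hst hsum
  have v4 := vec_upper' α β s t h12 h22 hs1 ht1 hst hsum
  nlinarith [sq_nonneg s, v1, v2, v3, v4]

private lemma mat_lower' (α β s t h11 h12 h21 h22 : ℝ) (hs1 : 1 ≤ s^2) (ht1 : t^2 ≤ 1)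
    (hst : s*t = β) (hsum : s^2+t^2 = 1+α^2+β^2) :
    t^4 * (h11^2+h12^2+h21^2+h22^2)
      ≤ h11^2 + (α*h11+β*h12)^2 + (α*h11+β*h21)^2 + (α*(α*h11+β*h21)+β*(α*h12+β*h22))^2 := by
  have v1 := vec_lower' α β s t h11 h12 hs1 ht1 hst hsum
  have v2 := vec_lower' α β s t (α*h11+β*h21) (α*h12+β*h22) hs1 ht1 hst hsum
  have v3 := vec_lower' α β s t h11 h21 hs1 ht1 hst hsum
  have v4 := vec_lower' α β s t h12 h22 hs1 ht1 hst hsum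
  nlinarith [sq_nonneg t, v1, v2, v3, v4]

/-- The continuous linear map version of `Qmap`. -/
def Qclm (α β : ℝ) : Pt →L[ℝ] Pt :=
  LinearMap.toContinuousLinearMap
    (Matrix.toLin (Module.Basis.finTwoProd ℝ) (Module.Basis.finTwoProd ℝ) !![1, α; 0, β])

lemma Qclm_apply (α β : ℝ) (p : Pt) : Qclm α β p = Qmap α β p := by
  simp [Qclm, Matrix.toLin_finTwoProd_apply, Qmap]

lemma Qclm_coe (α β : ℝ) : ⇑(Qclm α β) = Qmap α β := funext (Qclm_apply α β)

lemma Qclm_det (α β : ℝ) : (Qclm α β).det = β := by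
  simp [Qclm, ContinuousLinearMap.det, LinearMap.det_toLin, Matrix.det_fin_two_of]

lemma hasFDerivAt_qmap (α β : ℝ) (p : Pt) : HasFDerivAt (Qmap α β) (Qclm α β) p := by
  rw [← Qclm_coe]; exact (Qclm α β).hasFDerivAt

lemma qinv_qmap (α β : ℝ) (hβ : β ≠ 0) (p : Pt) : Qinv α β (Qmap α β p) = p := by
  simp only [Qinv, Qmap, Prod.ext_iff]
  constructor <;> field_simp <;> ring

lemma qmap_qinv (α β : ℝ) (hβ : β ≠ 0) (p : Pt) : Qmap α β (Qinv α β p) = p := by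
  simp only [Qinv, Qmap, Prod.ext_iff]
  constructor <;> field_simp <;> ring

lemma contDiff_qmap (α β : ℝ) : ContDiff ℝ 2 (Qmap α β) := by
  rw [← Qclm_coe]; exact (Qclm α β).contDiff

lemma contDiff_qinv (α β : ℝ) : ContDiff ℝ 2 (Qinv α β) := by
  unfold Qinv
  exact ContDiff.prodMk (contDiff_fst.sub (contDiff_const.mul contDiff_snd)) (contDiff_snd.div_const β)

lemma pd_comp (α β : ℝ) (w : Pt → ℝ) (p : Pt)
    (hw : DifferentiableAt ℝ w (Qmap α β p)) :
    pdx (w ∘ Qmap α β) p = pdx w (Qmap α β p) ∧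
    pdy (w ∘ Qmap α β) p = α * pdx w (Qmap α β p) + β * pdy w (Qmap α β p) := by
  have hf : fderiv ℝ (w ∘ Qmap α β) p = (fderiv ℝ w (Qmap α β p)).comp (Qclm α β) :=
    (hw.hasFDerivAt.comp p (hasFDerivAt_qmap α β p)).fderiv
  have h1 : (Qclm α β) ((1:ℝ),(0:ℝ)) = ((1:ℝ),(0:ℝ)) := by simp [Qclm_apply, Qmap]
  have h2 : (Qclm α β) ((0:ℝ),(1:ℝ)) = ((α:ℝ), (β:ℝ)) := by simp [Qclm_apply, Qmap]
  have h3 : ((α:ℝ), (β:ℝ)) = α • ((1:ℝ),(0:ℝ)) + β • ((0:ℝ),(1:ℝ)) := by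
    simp [Prod.ext_iff]
  constructor
  · simp [pdx, hf, ContinuousLinearMap.comp_apply, h1]
  · simp only [pdy, pdx, hf, ContinuousLinearMap.comp_apply, h2, h3, map_add,
      ContinuousLinearMap.map_smul, smul_eq_mul]

lemma pd_lin (a b : ℝ) (f g : Pt → ℝ) (q : Pt) (hf : DifferentiableAt ℝ f q)
    (hg : DifferentiableAt ℝ g q) :
    pdx (fun x => a * f x + b * g x) q = a * pdx f q + b * pdx g q ∧
    pdy (fun x => a * f x + b * g x) q = a * pdy f q + b * pdy g q := by
  have h : fderiv ℝ (fun x => a * f x + b * g x) q = a • fderiv ℝ f q + b • fderiv ℝ g q := by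
    rw [fderiv_fun_add (hf.const_mul a) (hg.const_mul b), fderiv_const_mul hf, fderiv_const_mul hg]
  constructor <;> simp [pdx, pdy, h, smul_eq_mul]

lemma norm_ub (β J X c : ℝ) (hβ : 0 < β) (hc : 0 ≤ c) (hJ : 0 ≤ J)
    (h : X ≤ c^2 * J) : Real.sqrt X ≤ (c / Real.sqrt β) * Real.sqrt (β * J) := by
  have hsβ : 0 < Real.sqrt β := Real.sqrt_pos.2 hβ
  have he : (c / Real.sqrt β) * Real.sqrt (β * J) = c * Real.sqrt J := by
    rw [Real.sqrt_mul hβ.le]; field_simp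
  rw [he]
  calc Real.sqrt X ≤ Real.sqrt (c^2 * J) := Real.sqrt_le_sqrt h
    _ = c * Real.sqrt J := by rw [Real.sqrt_mul (sq_nonneg c), Real.sqrt_sq hc]

lemma norm_lb (β J X c : ℝ) (hβ : 0 < β) (hc : 0 ≤ c) (hJ : 0 ≤ J)
    (h : c^2 * J ≤ X) : (c / Real.sqrt β) * Real.sqrt (β * J) ≤ Real.sqrt X := by
  have hsβ : 0 < Real.sqrt β := Real.sqrt_pos.2 hβ
  have he : (c / Real.sqrt β) * Real.sqrt (β * J) = c * Real.sqrt J := by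
    rw [Real.sqrt_mul hβ.le]; field_simp
  rw [he]
  calc c * Real.sqrt J = Real.sqrt (c^2 * J) := by
        rw [Real.sqrt_mul (sq_nonneg c), Real.sqrt_sq hc]
    _ ≤ Real.sqrt X := Real.sqrt_le_sqrt h

lemma master (α β s t : ℝ) (hβ : 0 < β) (hs0 : 0 ≤ s) (ht0 : 0 ≤ t)
    (hs1 : 1 ≤ s^2) (ht1 : t^2 ≤ 1) (hst : s*t = β) (hsum : s^2+t^2 = 1+α^2+β^2)
    (P1 P2 P3 : Pt) (u : Pt → ℝ) (hu : Smooth2 u (Tri P1 P2 P3)) :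
    (t/Real.sqrt β) * h1norm (u ∘ Qinv α β)
        (Tri (Qmap α β P1) (Qmap α β P2) (Qmap α β P3)) ≤ h1norm u (Tri P1 P2 P3) ∧
    h1norm u (Tri P1 P2 P3) ≤ (s/Real.sqrt β) * h1norm (u ∘ Qinv α β)
        (Tri (Qmap α β P1) (Qmap α β P2) (Qmap α β P3)) ∧
    (t^2/Real.sqrt β) * h2norm (u ∘ Qinv α β)
        (Tri (Qmap α β P1) (Qmap α β P2) (Qmap α β P3)) ≤ h2norm u (Tri P1 P2 P3) ∧
    h2norm u (Tri P1 P2 P3) ≤ (s^2/Real.sqrt β) * h2norm (u ∘ Qinv α β)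
        (Tri (Qmap α β P1) (Qmap α β P2) (Qmap α β P3)) := by
  obtain ⟨U, hUo, hKU, hucd⟩ := hu
  have hβ' : β ≠ 0 := ne_of_gt hβ
  set Q : Pt → Pt := Qmap α β with hQdef
  set v : Pt → ℝ := u ∘ Qinv α β with hvdef
  set K : Set Pt := Tri P1 P2 P3 with hKdef
  have hQc : Continuous Q := (contDiff_qmap α β).continuous
  have hQic : Continuous (Qinv α β) := (contDiff_qinv α β).continuous
  have hQinvQ : ∀ p, Qinv α β (Q p) = p := qinv_qmap α β hβ'
  have hQQinv : ∀ p, Q (Qinv α β p) = p := qmap_qinv α β hβ'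
  have huv : ∀ p, u p = v (Q p) := fun p => by
    simp [hvdef, Function.comp, hQinvQ]
  -- the image of U is open
  have himg : Q '' U = Qinv α β ⁻¹' U := by
    ext q
    constructor
    · rintro ⟨p, hp, rfl⟩
      simpa [hQinvQ] using hp
    · intro h
      exact ⟨Qinv α β q, h, hQQinv _⟩
  have hVo : IsOpen (Q '' U) := by rw [himg]; exact hUo.preimage hQic
  have hvcd : ContDiffOn ℝ 2 v (Q '' U) := by
    apply hucd.comp (contDiff_qinv α β).contDiffOn
    rintro q ⟨p, hp, rfl⟩
    rw [hQinvQ]; exact hp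
  -- the triangle
  have hKc : IsCompact K :=
    (Set.Finite.isCompact_convexHull ℝ (by
      exact (Set.finite_singleton P3).insert P2 |>.insert P1))
  have hKm : MeasurableSet K := hKc.isClosed.measurableSet
  have hK'img : Tri (Q P1) (Q P2) (Q P3) = Q '' K := by
    have h1 : Q '' ({P1, P2, P3} : Set Pt) = ({Q P1, Q P2, Q P3} : Set Pt) := by
      simp [Set.image_insert_eq]
    have h2 : ⇑((Qclm α β : Pt →L[ℝ] Pt).toLinearMap.toAffineMap) = Q := by
      funext p; simp [Qclm_apply, hQdef]
    have h3 := ((Qclm α β : Pt →L[ℝ] Pt).toLinearMap.toAffineMap).image_convexHull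
      ({P1, P2, P3} : Set Pt)
    rw [h2] at h3
    rw [hKdef, Tri, Tri, ← h1, ← h3]
  have hinj : Set.InjOn Q K := (Function.LeftInverse.injective hQinvQ).injOn
  -- change of variables
  have cov : ∀ g : Pt → ℝ, (∫ p in Q '' K, g p) = β * ∫ p in K, g (Q p) := by
    intro g
    rw [integral_image_eq_integral_abs_det_fderiv_smul volume hKm
      (fun x _ => (hasFDerivAt_qmap α β x).hasFDerivWithinAt) hinj g]
    simp only [Qclm_det, abs_of_pos hβ, smul_eq_mul]
    exact integral_const_mul β _
  -- smoothness of derivatives of v on Q '' U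
  have hv1 : ContDiffOn ℝ 1 (fderiv ℝ v) (Q '' U) :=
    hvcd.fderiv_of_isOpen hVo (by norm_num)
  have hvx : ContDiffOn ℝ 1 (pdx v) (Q '' U) := hv1.clm_apply contDiffOn_const
  have hvy : ContDiffOn ℝ 1 (pdy v) (Q '' U) := hv1.clm_apply contDiffOn_const
  have hvxd : ∀ q ∈ Q '' U, DifferentiableAt ℝ (pdx v) q := fun q hq =>
    ((hvx.differentiableOn one_ne_zero).differentiableAt (hVo.mem_nhds hq))
  have hvyd : ∀ q ∈ Q '' U, DifferentiableAt ℝ (pdy v) q := fun q hq =>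
    ((hvy.differentiableOn one_ne_zero).differentiableAt (hVo.mem_nhds hq))
  have hvd : ∀ q ∈ Q '' U, DifferentiableAt ℝ v q := fun q hq =>
    ((hvcd.differentiableOn (by norm_num)).differentiableAt (hVo.mem_nhds hq))
  -- continuity of second derivatives of v
  have hvx0 : ContDiffOn ℝ 0 (fderiv ℝ (pdx v)) (Q '' U) :=
    hvx.fderiv_of_isOpen hVo (by norm_num)
  have hvy0 : ContDiffOn ℝ 0 (fderiv ℝ (pdy v)) (Q '' U) :=
    hvy.fderiv_of_isOpen hVo (by norm_num)
  have hvxx : ContinuousOn (pdx (pdx v)) (Q '' U) :=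
    (hvx0.clm_apply contDiffOn_const).continuousOn
  have hvxy : ContinuousOn (pdy (pdx v)) (Q '' U) :=
    (hvx0.clm_apply contDiffOn_const).continuousOn
  have hvyx : ContinuousOn (pdx (pdy v)) (Q '' U) :=
    (hvy0.clm_apply contDiffOn_const).continuousOn
  have hvyy : ContinuousOn (pdy (pdy v)) (Q '' U) :=
    (hvy0.clm_apply contDiffOn_const).continuousOn
  -- same for u on U
  have hu1 : ContDiffOn ℝ 1 (fderiv ℝ u) U := hucd.fderiv_of_isOpen hUo (by norm_num)
  have hux : ContDiffOn ℝ 1 (pdx u) U := hu1.clm_apply contDiffOn_const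
  have huy : ContDiffOn ℝ 1 (pdy u) U := hu1.clm_apply contDiffOn_const
  have hux0 : ContDiffOn ℝ 0 (fderiv ℝ (pdx u)) U :=
    hux.fderiv_of_isOpen hUo (by norm_num)
  have huy0 : ContDiffOn ℝ 0 (fderiv ℝ (pdy u)) U :=
    huy.fderiv_of_isOpen hUo (by norm_num)
  have huxx : ContinuousOn (pdx (pdx u)) U :=
    (hux0.clm_apply contDiffOn_const).continuousOn
  have huxy : ContinuousOn (pdy (pdx u)) U :=
    (hux0.clm_apply contDiffOn_const).continuousOn
  have huyx : ContinuousOn (pdx (pdy u)) U :=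
    (huy0.clm_apply contDiffOn_const).continuousOn
  have huyy : ContinuousOn (pdy (pdy u)) U :=
    (huy0.clm_apply contDiffOn_const).continuousOn
  -- first-order chain rule on U
  have hQmem : ∀ p ∈ U, Q p ∈ Q '' U := fun p hp => ⟨p, hp, rfl⟩
  have hucomp : u = v ∘ Q := funext huv
  have e1 : ∀ p ∈ U, pdx u p = pdx v (Q p) := by
    intro p hp
    rw [hucomp]
    exact (pd_comp α β v p (hvd _ (hQmem p hp))).1
  have e2 : ∀ p ∈ U, pdy u p = α * pdx v (Q p) + β * pdy v (Q p) := by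
    intro p hp
    rw [hucomp]
    exact (pd_comp α β v p (hvd _ (hQmem p hp))).2
  -- second-order chain rule on U
  set w2 : Pt → ℝ := fun q => α * pdx v q + β * pdy v q with hw2def
  have hw2d : ∀ q ∈ Q '' U, DifferentiableAt ℝ w2 q := fun q hq =>
    ((hvxd q hq).const_mul α).add ((hvyd q hq).const_mul β)
  have ex1 : ∀ p ∈ U, pdx u =ᶠ[nhds p] (pdx v) ∘ Q := fun p hp =>
    Filter.eventuallyEq_of_mem (hUo.mem_nhds hp) (fun x hx => e1 x hx)
  have ex2 : ∀ p ∈ U, pdy u =ᶠ[nhds p] w2 ∘ Q := fun p hp =>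
    Filter.eventuallyEq_of_mem (hUo.mem_nhds hp) (fun x hx => e2 x hx)
  have f11 : ∀ p ∈ U, pdx (pdx u) p = pdx (pdx v) (Q p) := by
    intro p hp
    have hfd : fderiv ℝ (pdx u) p = fderiv ℝ ((pdx v) ∘ Q) p := (ex1 p hp).fderiv_eq
    have := (pd_comp α β (pdx v) p (hvxd _ (hQmem p hp))).1
    simpa [pdx, hfd] using this
  have f12 : ∀ p ∈ U, pdy (pdx u) p = α * pdx (pdx v) (Q p) + β * pdy (pdx v) (Q p) := by
    intro p hp
    have hfd : fderiv ℝ (pdx u) p = fderiv ℝ ((pdx v) ∘ Q) p := (ex1 p hp).fderiv_eq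
    have := (pd_comp α β (pdx v) p (hvxd _ (hQmem p hp))).2
    simpa [pdy, hfd] using this
  have hw2x : ∀ q ∈ Q '' U, pdx w2 q = α * pdx (pdx v) q + β * pdx (pdy v) q := fun q hq =>
    (pd_lin α β (pdx v) (pdy v) q (hvxd q hq) (hvyd q hq)).1
  have hw2y : ∀ q ∈ Q '' U, pdy w2 q = α * pdy (pdx v) q + β * pdy (pdy v) q := fun q hq =>
    (pd_lin α β (pdx v) (pdy v) q (hvxd q hq) (hvyd q hq)).2
  have f21 : ∀ p ∈ U, pdx (pdy u) p = α * pdx (pdx v) (Q p) + β * pdx (pdy v) (Q p) := by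
    intro p hp
    have hfd : fderiv ℝ (pdy u) p = fderiv ℝ (w2 ∘ Q) p := (ex2 p hp).fderiv_eq
    have h := (pd_comp α β w2 p (hw2d _ (hQmem p hp))).1
    have : pdx (pdy u) p = pdx w2 (Q p) := by simpa [pdx, hfd] using h
    rw [this, hw2x _ (hQmem p hp)]
  have f22 : ∀ p ∈ U, pdy (pdy u) p
      = α * (α * pdx (pdx v) (Q p) + β * pdx (pdy v) (Q p))
        + β * (α * pdy (pdx v) (Q p) + β * pdy (pdy v) (Q p)) := by
    intro p hp
    have hfd : fderiv ℝ (pdy u) p = fderiv ℝ (w2 ∘ Q) p := (ex2 p hp).fderiv_eq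
    have h := (pd_comp α β w2 p (hw2d _ (hQmem p hp))).2
    have : pdy (pdy u) p = α * pdx w2 (Q p) + β * pdy w2 (Q p) := by
      simpa [pdy, hfd] using h
    rw [this, hw2x _ (hQmem p hp), hw2y _ (hQmem p hp)]
  -- integrands
  have hKV : ∀ p ∈ K, Q p ∈ Q '' U := fun p hp => ⟨p, hKU hp, rfl⟩
  have hMapsTo : Set.MapsTo Q K (Q '' U) := fun p hp => hKV p hp
  -- integrability, first order
  have hInt_u1 : IntegrableOn (fun p => (pdx u p)^2 + (pdy u p)^2) K := by
    apply ContinuousOn.integrableOn_compact hKc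
    exact (((hux.continuousOn.mono hKU).pow 2).add ((huy.continuousOn.mono hKU).pow 2))
  have hvxQ : ContinuousOn (fun p => pdx v (Q p)) K :=
    (hvx.continuousOn).comp hQc.continuousOn hMapsTo
  have hvyQ : ContinuousOn (fun p => pdy v (Q p)) K :=
    (hvy.continuousOn).comp hQc.continuousOn hMapsTo
  have hInt_g1 : IntegrableOn (fun p => (pdx v (Q p))^2 + (pdy v (Q p))^2) K := by
    apply ContinuousOn.integrableOn_compact hKc
    exact ((hvxQ.pow 2).add (hvyQ.pow 2))
  set J1 : ℝ := ∫ p in K, ((pdx v (Q p))^2 + (pdy v (Q p))^2) with hJ1def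
  have hJ1 : 0 ≤ J1 := setIntegral_nonneg hKm (fun p _ => by positivity)
  have hcov1 : h1sq v (Tri (Q P1) (Q P2) (Q P3)) = β * J1 := by
    rw [h1sq, hK'img]
    exact cov _
  have hub1 : h1sq u K ≤ s^2 * J1 := by
    rw [h1sq]
    calc (∫ p in K, ((pdx u p)^2 + (pdy u p)^2))
        ≤ ∫ p in K, s^2 * ((pdx v (Q p))^2 + (pdy v (Q p))^2) := by
          apply setIntegral_mono_on hInt_u1 (hInt_g1.const_mul _) hKm
          intro p hp
          rw [e1 p (hKU hp), e2 p (hKU hp)]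
          exact vec_upper' α β s t _ _ hs1 ht1 hst hsum
      _ = s^2 * J1 := integral_const_mul _ _
  have hlb1 : t^2 * J1 ≤ h1sq u K := by
    rw [h1sq]
    calc t^2 * J1 = ∫ p in K, t^2 * ((pdx v (Q p))^2 + (pdy v (Q p))^2) :=
          (integral_const_mul _ _).symm
      _ ≤ ∫ p in K, ((pdx u p)^2 + (pdy u p)^2) := by
          apply setIntegral_mono_on (hInt_g1.const_mul _) hInt_u1 hKm
          intro p hp
          rw [e1 p (hKU hp), e2 p (hKU hp)]
          exact vec_lower' α β s t _ _ hs1 ht1 hst hsum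
  -- integrability, second order
  have hInt_u2 : IntegrableOn (fun p => (pdx (pdx u) p)^2 + (pdy (pdx u) p)^2
      + (pdx (pdy u) p)^2 + (pdy (pdy u) p)^2) K := by
    apply ContinuousOn.integrableOn_compact hKc
    exact ((((huxx.mono hKU).pow 2).add ((huxy.mono hKU).pow 2)).add
      ((huyx.mono hKU).pow 2)).add ((huyy.mono hKU).pow 2)
  have hvQ2 : ContinuousOn (fun p => (pdx (pdx v) (Q p))^2 + (pdy (pdx v) (Q p))^2
      + (pdx (pdy v) (Q p))^2 + (pdy (pdy v) (Q p))^2) K := by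
    exact ((((hvxx.comp hQc.continuousOn hMapsTo).pow 2).add
      ((hvxy.comp hQc.continuousOn hMapsTo).pow 2)).add
      ((hvyx.comp hQc.continuousOn hMapsTo).pow 2)).add
      ((hvyy.comp hQc.continuousOn hMapsTo).pow 2)
  have hInt_g2 : IntegrableOn (fun p => (pdx (pdx v) (Q p))^2 + (pdy (pdx v) (Q p))^2
      + (pdx (pdy v) (Q p))^2 + (pdy (pdy v) (Q p))^2) K :=
    ContinuousOn.integrableOn_compact hKc hvQ2
  set J2 : ℝ := ∫ p in K, ((pdx (pdx v) (Q p))^2 + (pdy (pdx v) (Q p))^2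
      + (pdx (pdy v) (Q p))^2 + (pdy (pdy v) (Q p))^2) with hJ2def
  have hJ2 : 0 ≤ J2 := setIntegral_nonneg hKm (fun p _ => by positivity)
  have hcov2 : h2sq v (Tri (Q P1) (Q P2) (Q P3)) = β * J2 := by
    rw [h2sq, hK'img]
    exact cov _
  have hub2 : h2sq u K ≤ s^4 * J2 := by
    rw [h2sq]
    calc (∫ p in K, ((pdx (pdx u) p)^2 + (pdy (pdx u) p)^2
            + (pdx (pdy u) p)^2 + (pdy (pdy u) p)^2))
        ≤ ∫ p in K, s^4 * ((pdx (pdx v) (Q p))^2 + (pdy (pdx v) (Q p))^2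
            + (pdx (pdy v) (Q p))^2 + (pdy (pdy v) (Q p))^2) := by
          apply setIntegral_mono_on hInt_u2 (hInt_g2.const_mul _) hKm
          intro p hp
          rw [f11 p (hKU hp), f12 p (hKU hp), f21 p (hKU hp), f22 p (hKU hp)]
          have := mat_upper' α β s t (pdx (pdx v) (Q p)) (pdy (pdx v) (Q p))
            (pdx (pdy v) (Q p)) (pdy (pdy v) (Q p)) hs1 ht1 hst hsum
          linarith
      _ = s^4 * J2 := integral_const_mul _ _
  have hlb2 : t^4 * J2 ≤ h2sq u K := by
    rw [h2sq]
    calc t^4 * J2 = ∫ p in K, t^4 * ((pdx (pdx v) (Q p))^2 + (pdy (pdx v) (Q p))^2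
            + (pdx (pdy v) (Q p))^2 + (pdy (pdy v) (Q p))^2) := (integral_const_mul _ _).symm
      _ ≤ ∫ p in K, ((pdx (pdx u) p)^2 + (pdy (pdx u) p)^2
            + (pdx (pdy u) p)^2 + (pdy (pdy u) p)^2) := by
          apply setIntegral_mono_on (hInt_g2.const_mul _) hInt_u2 hKm
          intro p hp
          rw [f11 p (hKU hp), f12 p (hKU hp), f21 p (hKU hp), f22 p (hKU hp)]
          have := mat_lower' α β s t (pdx (pdx v) (Q p)) (pdy (pdx v) (Q p))
            (pdx (pdy v) (Q p)) (pdy (pdy v) (Q p)) hs1 ht1 hst hsum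
          linarith
  -- conclude
  refine ⟨?_, ?_, ?_, ?_⟩
  · rw [h1norm, h1norm, hcov1]
    exact norm_lb β J1 _ t hβ ht0 hJ1 hlb1
  · rw [h1norm, h1norm, hcov1]
    exact norm_ub β J1 _ s hβ hs0 hJ1 hub1
  · rw [h2norm, h2norm, hcov2]
    have h4 : (t^2)^2 * J2 ≤ h2sq u K := by nlinarith [hlb2]
    exact norm_lb β J2 _ (t^2) hβ (sq_nonneg t) hJ2 h4
  · rw [h2norm, h2norm, hcov2]
    have h4 : h2sq u K ≤ (s^2)^2 * J2 := by nlinarith [hub2]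
    exact norm_ub β J2 _ (s^2) hβ (sq_nonneg s) hJ2 h4

private lemma trig_key (c s0 c' s' : ℝ) (hc : 0 < c) (hs0 : 0 < s0)
    (e1 : s0^2 + c^2 = 1) (e2 : s'^2 + c'^2 = 1) :
    (c'/c)^2 + (s'/s0)^2
      = 1 + ((2*c'^2-1-(2*c^2-1))/(2*s0*c))^2 + ((2*s'*c')/(2*s0*c))^2 := by
  field_simp
  linear_combination (4*s0^2*c^2*(c'^2-c^2)) * e1 - (4*s0^2*c^2*(c'^2-c^2)) * e2 + (4*c'^2*s0^2*c^2 - 4*c'^2 - 4*s0^2*c^4 + 4*c^2) * e2 + (c'^2*(-4*c^2*(s0^2+1-c^2) + 4 + 4*c^2 - 4*c^4) + 4*c^4*(s0^2+1-c^2) - 4*c^4 - 4*c^2 + 4*c^6) * e1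
/-- Lemma 4: perturbation of the vertex `B = (cos θ, sin θ)` along the unit
arc to `(cos(θ+τ), sin(θ+τ))` via the map `Q` with `α = (cos(θ+τ) − cos θ)/sin θ`,
`β = sin(θ+τ)/sin θ`, with factors `ρ = cos((θ+τ)/2)/cos(θ/2)`, `η = sin((θ+τ)/2)/sin(θ/2)`. -/
theorem stmt_11 (θ τ : ℝ) (hθ0 : 0 < θ) (hθπ : θ < π)
    (hτ0 : 0 < θ + τ) (hτπ : θ + τ < π)
    (α β ρ η : ℝ)
    (hα : α = (Real.cos (θ + τ) - Real.cos θ) / Real.sin θ)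
    (hβ : β = Real.sin (θ + τ) / Real.sin θ)
    (hρ : ρ = Real.cos ((θ + τ) / 2) / Real.cos (θ / 2))
    (hη : η = Real.sin ((θ + τ) / 2) / Real.sin (θ / 2))
    (u : Pt → ℝ)
    (hu : Smooth2 u (Tri ((0, 0) : Pt) ((1, 0) : Pt) ((Real.cos θ, Real.sin θ) : Pt))) :
    (τ < 0 →
      (η / Real.sqrt β) * h1norm (u ∘ Qinv α β)
          (Tri ((0, 0) : Pt) ((1, 0) : Pt) ((Real.cos (θ + τ), Real.sin (θ + τ)) : Pt)) ≤
        h1norm u (Tri ((0, 0) : Pt) ((1, 0) : Pt) ((Real.cos θ, Real.sin θ) : Pt)) ∧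
      h1norm u (Tri ((0, 0) : Pt) ((1, 0) : Pt) ((Real.cos θ, Real.sin θ) : Pt)) ≤
        (ρ / Real.sqrt β) * h1norm (u ∘ Qinv α β)
          (Tri ((0, 0) : Pt) ((1, 0) : Pt) ((Real.cos (θ + τ), Real.sin (θ + τ)) : Pt)) ∧
      (η ^ 2 / Real.sqrt β) * h2norm (u ∘ Qinv α β)
          (Tri ((0, 0) : Pt) ((1, 0) : Pt) ((Real.cos (θ + τ), Real.sin (θ + τ)) : Pt)) ≤
        h2norm u (Tri ((0, 0) : Pt) ((1, 0) : Pt) ((Real.cos θ, Real.sin θ) : Pt)) ∧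
      h2norm u (Tri ((0, 0) : Pt) ((1, 0) : Pt) ((Real.cos θ, Real.sin θ) : Pt)) ≤
        (ρ ^ 2 / Real.sqrt β) * h2norm (u ∘ Qinv α β)
          (Tri ((0, 0) : Pt) ((1, 0) : Pt) ((Real.cos (θ + τ), Real.sin (θ + τ)) : Pt))) ∧
    (0 < τ →
      (ρ / Real.sqrt β) * h1norm (u ∘ Qinv α β)
          (Tri ((0, 0) : Pt) ((1, 0) : Pt) ((Real.cos (θ + τ), Real.sin (θ + τ)) : Pt)) ≤
        h1norm u (Tri ((0, 0) : Pt) ((1, 0) : Pt) ((Real.cos θ, Real.sin θ) : Pt)) ∧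
      h1norm u (Tri ((0, 0) : Pt) ((1, 0) : Pt) ((Real.cos θ, Real.sin θ) : Pt)) ≤
        (η / Real.sqrt β) * h1norm (u ∘ Qinv α β)
          (Tri ((0, 0) : Pt) ((1, 0) : Pt) ((Real.cos (θ + τ), Real.sin (θ + τ)) : Pt)) ∧
      (ρ ^ 2 / Real.sqrt β) * h2norm (u ∘ Qinv α β)
          (Tri ((0, 0) : Pt) ((1, 0) : Pt) ((Real.cos (θ + τ), Real.sin (θ + τ)) : Pt)) ≤
        h2norm u (Tri ((0, 0) : Pt) ((1, 0) : Pt) ((Real.cos θ, Real.sin θ) : Pt)) ∧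
      h2norm u (Tri ((0, 0) : Pt) ((1, 0) : Pt) ((Real.cos θ, Real.sin θ) : Pt)) ≤
        (η ^ 2 / Real.sqrt β) * h2norm (u ∘ Qinv α β)
          (Tri ((0, 0) : Pt) ((1, 0) : Pt) ((Real.cos (θ + τ), Real.sin (θ + τ)) : Pt))) := by
  have hsθ : 0 < Real.sin θ := Real.sin_pos_of_pos_of_lt_pi hθ0 hθπ
  have hsτ : 0 < Real.sin (θ + τ) := Real.sin_pos_of_pos_of_lt_pi hτ0 hτπ
  have hβpos : 0 < β := by rw [hβ]; positivity
  have hpi := Real.pi_pos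
  have hc : 0 < Real.cos (θ/2) :=
    Real.cos_pos_of_mem_Ioo ⟨by linarith, by linarith⟩
  have hs0 : 0 < Real.sin (θ/2) :=
    Real.sin_pos_of_pos_of_lt_pi (by linarith) (by linarith)
  have hc' : 0 < Real.cos ((θ+τ)/2) :=
    Real.cos_pos_of_mem_Ioo ⟨by linarith, by linarith⟩
  have hs' : 0 < Real.sin ((θ+τ)/2) :=
    Real.sin_pos_of_pos_of_lt_pi (by linarith) (by linarith)
  have hρpos : 0 < ρ := by rw [hρ]; positivity
  have hηpos : 0 < η := by rw [hη]; positivity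
  have hcosθ : Real.cos θ = 2*(Real.cos (θ/2))^2 - 1 := by
    have h := Real.cos_two_mul (θ/2)
    rw [show 2*(θ/2) = θ by ring] at h
    linarith
  have hsinθ : Real.sin θ = 2*Real.sin (θ/2)*Real.cos (θ/2) := by
    have h := Real.sin_two_mul (θ/2)
    rw [show 2*(θ/2) = θ by ring] at h
    linarith
  have hcosτ : Real.cos (θ+τ) = 2*(Real.cos ((θ+τ)/2))^2 - 1 := by
    have h := Real.cos_two_mul ((θ+τ)/2)
    rw [show 2*((θ+τ)/2) = θ+τ by ring] at h
    linarith
  have hsinτ : Real.sin (θ+τ) = 2*Real.sin ((θ+τ)/2)*Real.cos ((θ+τ)/2) := by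
    have h := Real.sin_two_mul ((θ+τ)/2)
    rw [show 2*((θ+τ)/2) = θ+τ by ring] at h
    linarith
  have hprod : ρ * η = β := by
    rw [hρ, hη, hβ, hsinθ, hsinτ]
    field_simp
  have hsum : ρ^2 + η^2 = 1 + α^2 + β^2 := by
    rw [hρ, hη, hα, hβ, hsinθ, hcosθ, hsinτ, hcosτ]
    exact trig_key _ _ _ _ hc hs0 (Real.sin_sq_add_cos_sq (θ/2)) (Real.sin_sq_add_cos_sq ((θ+τ)/2))
  have hQ0 : Qmap α β ((0,0) : Pt) = ((0,0) : Pt) := by simp [Qmap]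
  have hQ1 : Qmap α β ((1,0) : Pt) = ((1,0) : Pt) := by simp [Qmap]
  have hQ2 : Qmap α β ((Real.cos θ, Real.sin θ) : Pt)
      = ((Real.cos (θ+τ), Real.sin (θ+τ)) : Pt) := by
    simp only [Qmap, hα, hβ, Prod.ext_iff]
    constructor <;> field_simp <;> ring
  constructor
  · intro hτneg
    have hlt : (θ+τ)/2 < θ/2 := by linarith
    have hcc : Real.cos (θ/2) < Real.cos ((θ+τ)/2) :=
      Real.cos_lt_cos_of_nonneg_of_le_pi (by linarith) (by linarith) hlt
    have hss : Real.sin ((θ+τ)/2) < Real.sin (θ/2) :=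
      Real.sin_lt_sin_of_lt_of_le_pi_div_two (by linarith) (by linarith) hlt
    have hρ1 : 1 ≤ ρ^2 := by
      have h1 : 1 ≤ ρ := by rw [hρ, le_div_iff₀ hc]; linarith
      simpa using pow_le_pow_left₀ zero_le_one h1 2
    have hη1 : η^2 ≤ 1 := by
      have h1 : η ≤ 1 := by rw [hη, div_le_one hs0]; linarith
      exact pow_le_one₀ hηpos.le h1
    have h := master α β ρ η hβpos hρpos.le hηpos.le hρ1 hη1 hprod hsum
      ((0,0) : Pt) ((1,0) : Pt) ((Real.cos θ, Real.sin θ) : Pt) u hu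
    rw [hQ0, hQ1, hQ2] at h
    exact h
  · intro hτpos
    have hlt : θ/2 < (θ+τ)/2 := by linarith
    have hcc : Real.cos ((θ+τ)/2) < Real.cos (θ/2) :=
      Real.cos_lt_cos_of_nonneg_of_le_pi (by linarith) (by linarith) hlt
    have hss : Real.sin (θ/2) < Real.sin ((θ+τ)/2) :=
      Real.sin_lt_sin_of_lt_of_le_pi_div_two (by linarith) (by linarith) hlt
    have hη1 : 1 ≤ η^2 := by
      have h1 : 1 ≤ η := by rw [hη, le_div_iff₀ hs0]; linarith
      simpa using pow_le_pow_left₀ zero_le_one h1 2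
    have hρ1 : ρ^2 ≤ 1 := by
      have h1 : ρ ≤ 1 := by rw [hρ, div_le_one hc]; linarith
      exact pow_le_one₀ hρpos.le h1
    have hprod' : η * ρ = β := by rw [mul_comm]; exact hprod
    have hsum' : η^2 + ρ^2 = 1 + α^2 + β^2 := by rw [add_comm]; exact hsum
    have h := master α β η ρ hβpos hηpos.le hρpos.le hη1 hρ1 hprod' hsum'
      ((0,0) : Pt) ((1,0) : Pt) ((Real.cos θ, Real.sin θ) : Pt) u hu
    rw [hQ0, hQ1, hQ2] at h
    exact h
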